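/- Let d ≥ 1 and p ≥ 1, and let G₁, G₂ be Borel probability measures on ℝ^d × S_d^{++}(ℝ). Suppose there exists (μ₀,Σ₀) ∈ ℝ^d × S_d^{++}(ℝ) such that ∫ d((μ,Σ),(μ₀,Σ₀))^p dG₁(μ,Σ) < ∞ and ∫ d((μ₀,Σ₀),(μ,Σ))^p dG₂(μ,Σ) < ∞, where d((μ₁,Σ₁),(μ₂,Σ₂)) = sqrt(‖μ₁−μ₂‖₂² + ‖log Σ₁ − log Σ₂‖_F²). Then Mix-SW_p^p(G₁,G₂) < ∞. -/

import Mathlib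

open MeasureTheory ProbabilityTheory Matrix ENNReal
open scoped RealInnerProductSpace

noncomputable section

namespace PaperSOT

/-- `ℝ^d` with the Euclidean norm. -/
abbrev E (d : ℕ) := EuclideanSpace ℝ (Fin d)

/-- real `d × d` matrices. -/
abbrev Mat (d : ℕ) := Matrix (Fin d) (Fin d) ℝ

instance (d : ℕ) : MeasurableSpace (Mat d) :=
  (inferInstance : MeasurableSpace (Fin d → Fin d → ℝ))

/-- squared Frobenius norm `‖A‖_F² = Tr(Aᵀ A)`. -/
def frobSq {d : ℕ} (A : Mat d) : ℝ := (Aᵀ * A).trace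

/-- Frobenius norm `‖A‖_F = sqrt (Tr (Aᵀ A))`. -/
def frobNorm {d : ℕ} (A : Mat d) : ℝ := Real.sqrt (frobSq A)

/-- the (unique, when it exists) symmetric logarithm of a matrix: for a symmetric
positive definite `Σ` this is the unique symmetric `S` with `exp S = Σ`. -/
def symLog {d : ℕ} (M : Mat d) : Mat d := by
  classical exact if h : ∃ S : Mat d, S.IsSymm ∧ NormedSpace.exp S = M then h.choose else 0

/-- `π` is a coupling of `μ` and `ν`: its marginals are `μ` and `ν`. -/
def IsCoupling {X Y : Type*} [MeasurableSpace X] [MeasurableSpace Y]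
    (π : Measure (X × Y)) (μ : Measure X) (ν : Measure Y) : Prop :=
  π.map Prod.fst = μ ∧ π.map Prod.snd = ν

/-- the Wasserstein-`p` cost `W_p^p` between two measures on `ℝ`:
the infimum over couplings of `∫ |x-y|^p dπ`. -/
def Wp (p : ℝ) (ν₁ ν₂ : Measure ℝ) : ℝ≥0∞ :=
  ⨅ (π : Measure (ℝ × ℝ)) (_ : IsCoupling π ν₁ ν₂),
    ∫⁻ z, ENNReal.ofReal (|z.1 - z.2| ^ p) ∂π

/-- the standard Gaussian measure on `ℝ^d`. -/
def stdGaussianE (d : ℕ) : Measure (E d) :=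
  (Measure.pi fun _ : Fin d => gaussianReal 0 1).map
    (MeasurableEquiv.toLp 2 (Fin d → ℝ))

/-- the uniform probability distribution on the unit sphere of `ℝ^d`,
realized as the law of a normalized standard Gaussian vector. -/
def unifSphere (d : ℕ) : Measure (E d) :=
  (stdGaussianE d).map (fun x => ‖x‖⁻¹ • x)

/-- the standard Gaussian measure on `d × d` matrices (i.i.d. standard normal entries). -/
def stdGaussianMat (d : ℕ) : Measure (Mat d) :=
  (Measure.pi fun _ : Fin d => Measure.pi fun _ : Fin d => gaussianReal 0 1 :
    Measure (Fin d → Fin d → ℝ)).map (fun g => (Matrix.of g : Mat d))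

/-- the uniform probability distribution on the unit Frobenius sphere of the space of
real symmetric `d × d` matrices, realized as the law of a Frobenius-normalized isotropic
Gaussian symmetric matrix. -/
def unifSymSphere (d : ℕ) : Measure (Mat d) :=
  (stdGaussianMat d).map (fun g =>
    (frobNorm ((2:ℝ)⁻¹ • (g + gᵀ)))⁻¹ • ((2:ℝ)⁻¹ • (g + gᵀ)))

/-- the space `S_d^{++}(ℝ)` of real symmetric positive definite `d × d` matrices. -/
abbrev PDMat (d : ℕ) := {M : Mat d // M.PosDef}

/-- the quadratic form `vᵀ M v`. -/
def quad {d : ℕ} (v : E d) (M : Mat d) : ℝ := ∑ i, ∑ j, v i * M i j * v j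

/-- the generalized geodesic projection
`P_{V_w}(μ, Σ) = w₁ ⟨μ, v⟩ + w₂ Tr(A log Σ)` on `ℝ^d × S_d^{++}(ℝ)`. -/
def projMix {d : ℕ} (w : E 2) (v : E d) (A : Mat d) (x : E d × PDMat d) : ℝ :=
  w 0 * ⟪x.1, v⟫ + w 1 * (A * symLog x.2.1).trace

/-- the mixed sliced Wasserstein distance (raised to the power `p`),
`Mix-SW_p^p(G₁,G₂) = ∫ W_p^p(P_{V_w}♯G₁, P_{V_w}♯G₂) dσ(w,v,A)`, where `σ` is the product
of the uniform distributions on the unit circle, the unit sphere of `ℝ^d` and the unit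
Frobenius sphere of symmetric `d × d` matrices. -/
def MixSW (d : ℕ) (p : ℝ) (G₁ G₂ : Measure (E d × PDMat d)) : ℝ≥0∞ :=
  ∫⁻ w, ∫⁻ v, ∫⁻ A,
      Wp p (G₁.map (projMix w v A)) (G₂.map (projMix w v A))
    ∂(unifSymSphere d) ∂(unifSphere d) ∂(unifSphere 2)

/-- the log-Euclidean distance
`d((μ₁,Σ₁),(μ₂,Σ₂)) = sqrt(‖μ₁-μ₂‖² + ‖log Σ₁ - log Σ₂‖_F²)` on `ℝ^d × S_d^{++}(ℝ)`. -/
def dLE {d : ℕ} (x y : E d × PDMat d) : ℝ :=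
  Real.sqrt (‖x.1 - y.1‖ ^ 2 + frobSq (symLog x.2.1 - symLog y.2.1))

/-- the projection `P_{v,w}(μ,Σ) = w₁ ⟨v,μ⟩ + w₂ log √(vᵀ Σ v)` used by the sliced
mixture Wasserstein distance. -/
def projSMix {d : ℕ} (w : E 2) (v : E d) (x : E d × PDMat d) : ℝ :=
  w 0 * ⟪v, x.1⟫ + w 1 * Real.log (Real.sqrt (quad v x.2.1))

/-- the sliced mixture Wasserstein distance (raised to the power `p`),
`SMix-W_p^p(G₁,G₂) = ∫ W_p^p(P_{v,w}♯G₁, P_{v,w}♯G₂) dσ(w,v)`, where `σ` is the product of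
the uniform distributions on the unit circle and on the unit sphere of `ℝ^d`. -/
def SMixW (d : ℕ) (p : ℝ) (G₁ G₂ : Measure (E d × PDMat d)) : ℝ≥0∞ :=
  ∫⁻ w, ∫⁻ v,
      Wp p (G₁.map (projSMix w v)) (G₂.map (projSMix w v))
    ∂(unifSphere d) ∂(unifSphere 2)

/-- the symmetrized log-Rayleigh quantity
`L(Σ₁,Σ₂) = sup_{‖u‖=1} |log (uᵀΣ₁u / uᵀΣ₂u)|`. -/
def logRayleigh {d : ℕ} (S₁ S₂ : Mat d) : ℝ :=
  sSup {r : ℝ | ∃ u : E d, ‖u‖ = 1 ∧ r = |Real.log (quad u S₁ / quad u S₂)|}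

/-- the distance `d_S((μ₁,Σ₁),(μ₂,Σ₂)) = sqrt(‖μ₁-μ₂‖² + (1/4) L(Σ₁,Σ₂)²)`. -/
def dS {d : ℕ} (x y : E d × PDMat d) : ℝ :=
  Real.sqrt (‖x.1 - y.1‖ ^ 2 + (1/4) * (logRayleigh x.2.1 y.2.1) ^ 2)

/-- a measure is finitely supported if some finite set has full measure. -/
def FinSupp {X : Type*} [MeasurableSpace X] (G : Measure X) : Prop :=
  ∃ s : Finset X, G (↑s : Set X)ᶜ = 0

/-- the Gaussian measure `N(m, Σ)` on `ℝ^d` (with `Σ` positive semidefinite), realized as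
the law of `m + Σ^{1/2} Z` for a standard Gaussian vector `Z`. -/
def gaussianE {d : ℕ} (m : E d) {S : Mat d} (hS : S.PosSemidef) : Measure (E d) :=
  (stdGaussianE d).map (fun x =>
    m + (MeasurableEquiv.toLp 2 (Fin d → ℝ)) ((hS.1.eigenvectorUnitary.1 * diagonal (Real.sqrt ∘ hS.1.eigenvalues) *
      (star hS.1.eigenvectorUnitary : Mat d)).mulVec (fun i => x i)))

/-! ### Auxiliary lemmas -/

section Aux

lemma isSA {d : ℕ} {S : Mat d} (h : S.IsSymm) : IsSelfAdjoint S := by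
  show Sᴴ = S
  rw [Matrix.conjTranspose_eq_transpose_of_trivial]; exact h

lemma expInj {d : ℕ} {S₁ S₂ : Mat d} (h₁ : S₁.IsSymm) (h₂ : S₂.IsSymm)
    (h : NormedSpace.exp S₁ = NormedSpace.exp S₂) : S₁ = S₂ := by
  letI : NormedRing (Mat d) := Matrix.linftyOpNormedRing
  letI : NormedAlgebra ℝ (Mat d) := Matrix.linftyOpNormedAlgebra
  have := @CFC.log_exp (Mat d) Matrix.linftyOpNormedRing _ Matrix.linftyOpNormedAlgebra Matrix.IsHermitian.instContinuousFunctionalCalculus S₁ (isSA h₁)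
  have e2 := @CFC.log_exp (Mat d) Matrix.linftyOpNormedRing _ Matrix.linftyOpNormedAlgebra Matrix.IsHermitian.instContinuousFunctionalCalculus S₂ (isSA h₂)
  have key := congrArg (@CFC.log (Mat d) Matrix.linftyOpNormedRing _ Matrix.linftyOpNormedAlgebra Matrix.IsHermitian.instContinuousFunctionalCalculus) h
  exact this.symm.trans (key.trans e2)

instance (d : ℕ) : BorelSpace (Mat d) :=
  ⟨(inferInstance : BorelSpace (Fin d → Fin d → ℝ)).measurable_eq⟩

instance (d : ℕ) : PolishSpace (Mat d) :=
  inferInstanceAs (PolishSpace (Fin d → Fin d → ℝ))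

lemma measurable_entry {d : ℕ} (i j : Fin d) : Measurable fun M : Mat d => M i j :=
  (measurable_pi_apply j).comp (measurable_pi_apply i)

lemma measurable_exp_mat {d : ℕ} : Measurable (NormedSpace.exp : Mat d → Mat d) := by
  have : Continuous (NormedSpace.exp : Mat d → Mat d) := by
    letI : NormedRing (Mat d) := Matrix.linftyOpNormedRing
    letI : NormedAlgebra ℝ (Mat d) := Matrix.linftyOpNormedAlgebra
    letI : NormedAlgebra ℚ (Mat d) := NormedAlgebra.restrictScalars ℚ ℝ (Mat d)
    exact NormedSpace.exp_continuous
  exact this.measurable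

lemma measurableSet_isSymm {d : ℕ} : MeasurableSet {S : Mat d | S.IsSymm} := by
  have : {S : Mat d | S.IsSymm} = ⋂ i, ⋂ j, {S : Mat d | S j i = S i j} := by
    ext S
    simp only [Set.mem_setOf_eq, Set.mem_iInter, Matrix.IsSymm, ← Matrix.ext_iff,
      Matrix.transpose_apply]
  rw [this]
  exact MeasurableSet.iInter fun i => MeasurableSet.iInter fun j =>
    measurableSet_eq_fun (measurable_entry j i) (measurable_entry i j)

lemma measurable_symLog {d : ℕ} : Measurable (symLog : Mat d → Mat d) := by
  classical
  haveI : StandardBorelSpace {S : Mat d | S.IsSymm} := measurableSet_isSymm.standardBorel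
  set f : {S : Mat d | S.IsSymm} → Mat d := fun S => NormedSpace.exp (S : Mat d) with hf
  have hfm : Measurable f := measurable_exp_mat.comp measurable_subtype_coe
  have hfinj : Function.Injective f := by
    intro S₁ S₂ h
    exact Subtype.ext (expInj S₁.2 S₂.2 h)
  have hemb : MeasurableEmbedding f := hfm.measurableEmbedding hfinj
  obtain ⟨g, hg, hgf⟩ := hemb.exists_measurable_extend
    (measurable_subtype_coe : Measurable ((↑) : {S : Mat d | S.IsSymm} → Mat d))
    (fun _ => ⟨0⟩)
  have hkey : (symLog : Mat d → Mat d) =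
      fun M => if M ∈ Set.range f then g M else 0 := by
    funext M
    unfold symLog
    by_cases h : ∃ S : Mat d, S.IsSymm ∧ NormedSpace.exp S = M
    · rw [dif_pos h]
      have hch := h.choose_spec
      have hmem : M ∈ Set.range f := ⟨⟨h.choose, hch.1⟩, hch.2⟩
      rw [if_pos hmem]
      have h1 : g (f ⟨h.choose, hch.1⟩) = h.choose := congrFun hgf _
      have h2 : f ⟨h.choose, hch.1⟩ = M := hch.2
      exact (h2 ▸ h1).symm
    · rw [dif_neg h]
      have hmem : M ∉ Set.range f := by
        rintro ⟨S, hSM⟩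
        exact h ⟨S.1, S.2, hSM⟩
      rw [if_neg hmem]
  rw [hkey]
  exact Measurable.ite hemb.measurableSet_range hg measurable_const

lemma frobSq_eq_sum {d : ℕ} (A : Mat d) : frobSq A = ∑ i, ∑ j, (A j i) ^ 2 := by
  simp [frobSq, Matrix.trace, Matrix.diag, Matrix.mul_apply, Matrix.transpose_apply, sq]

lemma frobSq_nonneg {d : ℕ} (A : Mat d) : 0 ≤ frobSq A := by
  rw [frobSq_eq_sum]
  exact Finset.sum_nonneg fun i _ => Finset.sum_nonneg fun j _ => sq_nonneg _

lemma frobNorm_nonneg {d : ℕ} (A : Mat d) : 0 ≤ frobNorm A := Real.sqrt_nonneg _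

lemma frobNorm_smul {d : ℕ} (c : ℝ) (A : Mat d) : frobNorm (c • A) = |c| * frobNorm A := by
  have h : frobSq (c • A) = c ^ 2 * frobSq A := by
    simp only [frobSq_eq_sum, Matrix.smul_apply, smul_eq_mul, mul_pow, Finset.mul_sum]
  rw [frobNorm, h, Real.sqrt_mul (sq_nonneg c), Real.sqrt_sq_eq_abs, frobNorm]

lemma abs_trace_mul_le {d : ℕ} (A M : Mat d) :
    |(A * M).trace| ≤ frobNorm A * frobNorm M := by
  have hT : (A * M).trace = ∑ p : Fin d × Fin d, A p.1 p.2 * M p.2 p.1 := by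
    rw [← Finset.univ_product_univ, Finset.sum_product]
    simp [Matrix.trace, Matrix.diag, Matrix.mul_apply]
  have hA : ∑ p : Fin d × Fin d, (A p.1 p.2) ^ 2 = frobSq A := by
    rw [← Finset.univ_product_univ, Finset.sum_product, frobSq_eq_sum]
    exact Finset.sum_comm
  have hM : ∑ p : Fin d × Fin d, (M p.2 p.1) ^ 2 = frobSq M := by
    rw [← Finset.univ_product_univ, Finset.sum_product, frobSq_eq_sum]
  have cs := Finset.sum_mul_sq_le_sq_mul_sq Finset.univ
    (fun p : Fin d × Fin d => A p.1 p.2) (fun p : Fin d × Fin d => M p.2 p.1)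
  rw [hA, hM] at cs
  have habs : |(A * M).trace| ≤ Real.sqrt (frobSq A * frobSq M) := by
    apply Real.abs_le_sqrt
    rw [hT]
    exact cs
  rwa [Real.sqrt_mul (frobSq_nonneg A)] at habs

lemma measurable_frobSq {d : ℕ} : Measurable (frobSq : Mat d → ℝ) := by
  have : (frobSq : Mat d → ℝ) = fun A => ∑ i, ∑ j, (A j i) ^ 2 := funext frobSq_eq_sum
  rw [this]
  exact Finset.measurable_sum _ fun i _ => Finset.measurable_sum _ fun j _ =>
    (measurable_entry j i).pow_const 2

lemma measurable_frobNorm {d : ℕ} : Measurable (frobNorm : Mat d → ℝ) :=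
  Real.continuous_sqrt.measurable.comp measurable_frobSq

lemma measurable_matrix_fun {d : ℕ} {X : Type*} [MeasurableSpace X] {F : X → Mat d}
    (h : ∀ i j, Measurable fun x => F x i j) : Measurable F :=
  measurable_pi_lambda _ fun i => measurable_pi_lambda _ fun j => h i j

lemma measurable_trace_mul {d : ℕ} (A : Mat d) :
    Measurable fun M : Mat d => (A * M).trace := by
  have : (fun M : Mat d => (A * M).trace) = fun M => ∑ i, ∑ j, A i j * M j i := by
    funext M; simp [Matrix.trace, Matrix.diag, Matrix.mul_apply]
  rw [this]
  exact Finset.measurable_sum _ fun i _ => Finset.measurable_sum _ fun j _ =>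
    (measurable_entry j i).const_mul _

/-! ### probability instances and a.e. bounds -/

instance (d : ℕ) : IsProbabilityMeasure (stdGaussianE d) := by
  unfold stdGaussianE
  exact Measure.isProbabilityMeasure_map (MeasurableEquiv.measurable _).aemeasurable

lemma measurable_normalize (d : ℕ) : Measurable fun x : E d => ‖x‖⁻¹ • x :=
  (measurable_norm.inv).smul measurable_id

instance (d : ℕ) : IsProbabilityMeasure (unifSphere d) := by
  unfold unifSphere
  exact Measure.isProbabilityMeasure_map (measurable_normalize d).aemeasurable

instance (d : ℕ) : IsProbabilityMeasure (stdGaussianMat d) := by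
  unfold stdGaussianMat
  exact Measure.isProbabilityMeasure_map (measurable_id'.aemeasurable)

lemma measurable_symmetrize (d : ℕ) :
    Measurable fun g : Mat d => (2:ℝ)⁻¹ • (g + gᵀ) := by
  apply measurable_matrix_fun
  intro i j
  have : (fun g : Mat d => ((2:ℝ)⁻¹ • (g + gᵀ)) i j) = fun g => 2⁻¹ * (g i j + g j i) := by
    funext g
    simp [Matrix.smul_apply, Matrix.add_apply, Matrix.transpose_apply, smul_eq_mul]
  rw [this]
  exact ((measurable_entry i j).add (measurable_entry j i)).const_mul _

lemma measurable_symNormalize (d : ℕ) :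
    Measurable fun g : Mat d =>
      (frobNorm ((2:ℝ)⁻¹ • (g + gᵀ)))⁻¹ • ((2:ℝ)⁻¹ • (g + gᵀ)) := by
  have h1 := measurable_symmetrize d
  apply measurable_matrix_fun
  intro i j
  have : (fun g : Mat d => ((frobNorm ((2:ℝ)⁻¹ • (g + gᵀ)))⁻¹ • ((2:ℝ)⁻¹ • (g + gᵀ))) i j)
      = fun g => (frobNorm ((2:ℝ)⁻¹ • (g + gᵀ)))⁻¹ * (((2:ℝ)⁻¹ • (g + gᵀ)) i j) := by
    funext g; simp only [Matrix.smul_apply, smul_eq_mul]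
  rw [this]
  exact ((measurable_frobNorm.comp h1).inv).mul
    (((measurable_entry i j).comp h1))

instance (d : ℕ) : IsProbabilityMeasure (unifSymSphere d) := by
  unfold unifSymSphere
  exact Measure.isProbabilityMeasure_map (measurable_symNormalize d).aemeasurable

lemma ae_norm_le_one (d : ℕ) : ∀ᵐ v ∂(unifSphere d), ‖v‖ ≤ 1 := by
  rw [unifSphere, MeasureTheory.ae_map_iff (measurable_normalize d).aemeasurable
    (measurableSet_le measurable_norm measurable_const)]
  filter_upwards with x
  rcases eq_or_ne x 0 with h | h
  · simp [h]
  · rw [norm_smul, norm_inv, norm_norm, inv_mul_cancel₀ (norm_ne_zero_iff.mpr h)]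

lemma ae_frobNorm_le_one (d : ℕ) : ∀ᵐ A ∂(unifSymSphere d), frobNorm A ≤ 1 := by
  rw [unifSymSphere, MeasureTheory.ae_map_iff (measurable_symNormalize d).aemeasurable
    (measurableSet_le measurable_frobNorm measurable_const)]
  filter_upwards with g
  rw [frobNorm_smul]
  rcases eq_or_ne (frobNorm ((2:ℝ)⁻¹ • (g + gᵀ))) 0 with h | h
  · rw [h, mul_zero]; exact zero_le_one
  · rw [abs_inv, abs_of_nonneg (frobNorm_nonneg _), inv_mul_cancel₀ h]

lemma abs_apply_le_norm {n : ℕ} (w : E n) (i : Fin n) : |w i| ≤ ‖w‖ := by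
  rw [EuclideanSpace.norm_eq]
  apply Real.abs_le_sqrt
  have h : (w i) ^ 2 = ‖w i‖ ^ 2 := by rw [Real.norm_eq_abs, sq_abs]
  rw [h]
  exact Finset.single_le_sum (fun j _ => sq_nonneg ‖w j‖) (Finset.mem_univ i)

/-! ### measurability of the projections and of `dLE` -/

lemma measurable_projMix {d : ℕ} (w : E 2) (v : E d) (A : Mat d) :
    Measurable (projMix w v A) := by
  apply Measurable.add
  · have hc : Continuous fun a : E d => ⟪a, v⟫ := continuous_id.inner continuous_const
    exact ((hc.measurable).comp measurable_fst).const_mul _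
  · exact (((measurable_trace_mul A).comp
      (measurable_symLog.comp (measurable_subtype_coe.comp measurable_snd)))).const_mul _

lemma measurable_dLE_left {d : ℕ} (y : E d × PDMat d) :
    Measurable fun x : E d × PDMat d => dLE x y := by
  apply Real.continuous_sqrt.measurable.comp
  apply Measurable.add
  · have hc : Continuous fun a : E d => ‖a - y.1‖ ^ 2 :=
      ((continuous_id.sub continuous_const).norm).pow 2
    exact hc.measurable.comp measurable_fst
  · apply measurable_frobSq.comp
    apply measurable_matrix_fun
    intro i j
    simp only [Matrix.sub_apply]
    exact ((measurable_entry i j).comp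
      (measurable_symLog.comp (measurable_subtype_coe.comp measurable_snd))).sub
      measurable_const

lemma measurable_dLE_right {d : ℕ} (x : E d × PDMat d) :
    Measurable fun y : E d × PDMat d => dLE x y := by
  apply Real.continuous_sqrt.measurable.comp
  apply Measurable.add
  · have hc : Continuous fun a : E d => ‖x.1 - a‖ ^ 2 :=
      ((continuous_const.sub continuous_id).norm).pow 2
    exact hc.measurable.comp measurable_fst
  · apply measurable_frobSq.comp
    apply measurable_matrix_fun
    intro i j
    simp only [Matrix.sub_apply]
    exact measurable_const.sub ((measurable_entry i j).comp
      (measurable_symLog.comp (measurable_subtype_coe.comp measurable_snd)))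

/-! ### the key pointwise inequality -/

lemma projMix_diff_le {d : ℕ} {w : E 2} {v : E d} {A : Mat d}
    (hw0 : |w 0| ≤ 1) (hw1 : |w 1| ≤ 1) (hv : ‖v‖ ≤ 1) (hA : frobNorm A ≤ 1)
    (x y : E d × PDMat d) :
    |projMix w v A x - projMix w v A y| ≤ 2 * dLE x y := by
  have h1 : ‖x.1 - y.1‖ ≤ dLE x y := by
    rw [dLE]
    exact (Real.le_sqrt (norm_nonneg _) (add_nonneg (sq_nonneg _) (frobSq_nonneg _))).mpr
      (le_add_of_nonneg_right (frobSq_nonneg _))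
  have h2 : frobNorm (symLog x.2.1 - symLog y.2.1) ≤ dLE x y := by
    rw [dLE, frobNorm]
    exact Real.sqrt_le_sqrt (le_add_of_nonneg_left (sq_nonneg _))
  have hsplit : projMix w v A x - projMix w v A y
      = w 0 * ⟪x.1 - y.1, v⟫ + w 1 * (A * (symLog x.2.1 - symLog y.2.1)).trace := by
    rw [projMix, projMix, inner_sub_left, Matrix.mul_sub, Matrix.trace_sub]; ring
  rw [hsplit]
  have e1 : |w 0 * ⟪x.1 - y.1, v⟫| ≤ dLE x y := by
    rw [abs_mul]
    calc |w 0| * |⟪x.1 - y.1, v⟫| ≤ 1 * (‖x.1 - y.1‖ * ‖v‖) :=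
          mul_le_mul hw0 (abs_real_inner_le_norm _ _) (abs_nonneg _) zero_le_one
      _ = ‖x.1 - y.1‖ * ‖v‖ := one_mul _
      _ ≤ ‖x.1 - y.1‖ := mul_le_of_le_one_right (norm_nonneg _) hv
      _ ≤ dLE x y := h1
  have e2 : |w 1 * (A * (symLog x.2.1 - symLog y.2.1)).trace| ≤ dLE x y := by
    rw [abs_mul]
    calc |w 1| * |(A * (symLog x.2.1 - symLog y.2.1)).trace|
        ≤ 1 * (frobNorm A * frobNorm (symLog x.2.1 - symLog y.2.1)) :=
          mul_le_mul hw1 (abs_trace_mul_le _ _) (abs_nonneg _) zero_le_one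
      _ = frobNorm A * frobNorm (symLog x.2.1 - symLog y.2.1) := one_mul _
      _ ≤ 1 * frobNorm (symLog x.2.1 - symLog y.2.1) :=
          mul_le_mul_of_nonneg_right hA (frobNorm_nonneg _)
      _ = frobNorm (symLog x.2.1 - symLog y.2.1) := one_mul _
      _ ≤ dLE x y := h2
  calc |w 0 * ⟪x.1 - y.1, v⟫ + w 1 * (A * (symLog x.2.1 - symLog y.2.1)).trace|
      ≤ |w 0 * ⟪x.1 - y.1, v⟫| + |w 1 * (A * (symLog x.2.1 - symLog y.2.1)).trace| :=
        abs_add_le _ _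
    _ ≤ dLE x y + dLE x y := add_le_add e1 e2
    _ = 2 * dLE x y := by ring

lemma rpow_bound {p : ℝ} (hp : 1 ≤ p) {t D₁ D₂ : ℝ} (ht : 0 ≤ t) (hD₁ : 0 ≤ D₁)
    (hD₂ : 0 ≤ D₂) (h : t ≤ 2 * (D₁ + D₂)) :
    t ^ p ≤ 4 ^ p * (D₁ ^ p + D₂ ^ p) := by
  have hm : t ≤ 4 * max D₁ D₂ := by
    have h1 := le_max_left D₁ D₂
    have h2 := le_max_right D₁ D₂
    linarith
  have h0 : (0:ℝ) ≤ max D₁ D₂ := le_trans hD₁ (le_max_left _ _)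
  calc t ^ p ≤ (4 * max D₁ D₂) ^ p := Real.rpow_le_rpow ht hm (by linarith)
    _ = 4 ^ p * (max D₁ D₂) ^ p := Real.mul_rpow (by norm_num) h0
    _ ≤ 4 ^ p * (D₁ ^ p + D₂ ^ p) := by
        apply mul_le_mul_of_nonneg_left _ (Real.rpow_nonneg (by norm_num) p)
        rcases max_cases D₁ D₂ with ⟨hm1, _⟩ | ⟨hm1, _⟩ <;> rw [hm1]
        · exact le_add_of_nonneg_right (Real.rpow_nonneg hD₂ p)
        · exact le_add_of_nonneg_left (Real.rpow_nonneg hD₁ p)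

/-! ### the Wasserstein bound for a single slice -/

set_option maxHeartbeats 1000000 in
set_option synthInstance.maxHeartbeats 200000 in
lemma Wp_slice_le {d : ℕ} {p : ℝ} (hp : 1 ≤ p) (G₁ G₂ : Measure (E d × PDMat d))
    [IsProbabilityMeasure G₁] [IsProbabilityMeasure G₂] (x₀ : E d × PDMat d)
    {w : E 2} {v : E d} {A : Mat d}
    (hw0 : |w 0| ≤ 1) (hw1 : |w 1| ≤ 1) (hv : ‖v‖ ≤ 1) (hA : frobNorm A ≤ 1) :
    Wp p (G₁.map (projMix w v A)) (G₂.map (projMix w v A)) ≤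
      ENNReal.ofReal (4 ^ p) *
        ((∫⁻ x, ENNReal.ofReal (dLE x x₀ ^ p) ∂G₁) +
          ∫⁻ x, ENNReal.ofReal (dLE x₀ x ^ p) ∂G₂) := by
  set f := projMix w v A with hfdef
  have hf : Measurable f := measurable_projMix w v A
  haveI : IsProbabilityMeasure (G₁.map f) := Measure.isProbabilityMeasure_map hf.aemeasurable
  haveI : IsProbabilityMeasure (G₂.map f) := Measure.isProbabilityMeasure_map hf.aemeasurable
  haveI : SFinite (G₁.map f) := inferInstance
  haveI : SFinite (G₂.map f) := inferInstance
  have hcoup : IsCoupling ((G₁.map f).prod (G₂.map f)) (G₁.map f) (G₂.map f) :=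
    ⟨Measure.fst_prod, Measure.snd_prod⟩
  rw [Wp]
  refine le_trans (iInf₂_le ((G₁.map f).prod (G₂.map f)) hcoup) ?_
  rw [Measure.map_prod_map _ _ hf hf]
  have hrp : Measurable fun t : ℝ => t ^ p :=
    (Real.continuous_rpow_const (by linarith)).measurable
  have hint : Measurable fun z : ℝ × ℝ => ENNReal.ofReal (|z.1 - z.2| ^ p) :=
    (hrp.comp (measurable_fst.sub measurable_snd).abs).ennreal_ofReal
  rw [lintegral_map hint (hf.prodMap hf)]
  have hF₁ : Measurable fun a : E d × PDMat d => ENNReal.ofReal (dLE a x₀ ^ p) :=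
    (hrp.comp (measurable_dLE_left x₀)).ennreal_ofReal
  have hF₂ : Measurable fun b : E d × PDMat d => ENNReal.ofReal (dLE x₀ b ^ p) :=
    (hrp.comp (measurable_dLE_right x₀)).ennreal_ofReal
  have hptw : ∀ z : (E d × PDMat d) × (E d × PDMat d),
      ENNReal.ofReal (|f z.1 - f z.2| ^ p) ≤
        ENNReal.ofReal (4 ^ p) *
          (ENNReal.ofReal (dLE z.1 x₀ ^ p) + ENNReal.ofReal (dLE x₀ z.2 ^ p)) := by
    intro z
    have hd₁ : 0 ≤ dLE z.1 x₀ := Real.sqrt_nonneg _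
    have hd₂ : 0 ≤ dLE x₀ z.2 := Real.sqrt_nonneg _
    have htri : |f z.1 - f z.2| ≤ 2 * (dLE z.1 x₀ + dLE x₀ z.2) := by
      have b1 := projMix_diff_le hw0 hw1 hv hA z.1 x₀
      have b2 := projMix_diff_le hw0 hw1 hv hA x₀ z.2
      have b3 : |f z.1 - f z.2| ≤ |f z.1 - f x₀| + |f x₀ - f z.2| := abs_sub_le _ _ _
      rw [hfdef] at b3
      linarith
    have hb := rpow_bound hp (abs_nonneg _) hd₁ hd₂ htri
    calc ENNReal.ofReal (|f z.1 - f z.2| ^ p)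
        ≤ ENNReal.ofReal (4 ^ p * (dLE z.1 x₀ ^ p + dLE x₀ z.2 ^ p)) :=
          ENNReal.ofReal_le_ofReal hb
      _ = ENNReal.ofReal (4 ^ p) *
            (ENNReal.ofReal (dLE z.1 x₀ ^ p) + ENNReal.ofReal (dLE x₀ z.2 ^ p)) := by
          rw [ENNReal.ofReal_mul (Real.rpow_nonneg (by norm_num) p),
            ENNReal.ofReal_add (Real.rpow_nonneg hd₁ p) (Real.rpow_nonneg hd₂ p)]
  have hmono := lintegral_mono (μ := G₁.prod G₂) hptw
  refine le_trans hmono ?_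
  have hFfst : Measurable fun z : (E d × PDMat d) × (E d × PDMat d) =>
      ENNReal.ofReal (dLE z.1 x₀ ^ p) := hF₁.comp measurable_fst
  have hFsum : Measurable fun z : (E d × PDMat d) × (E d × PDMat d) =>
      ENNReal.ofReal (dLE z.1 x₀ ^ p) + ENNReal.ofReal (dLE x₀ z.2 ^ p) :=
    hFfst.add (hF₂.comp measurable_snd)
  rw [lintegral_const_mul _ hFsum]
  apply mul_le_mul_right
  rw [lintegral_add_left hFfst]
  have e1 : ∫⁻ z, ENNReal.ofReal (dLE z.1 x₀ ^ p) ∂(G₁.prod G₂)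
      = ∫⁻ x, ENNReal.ofReal (dLE x x₀ ^ p) ∂G₁ := by
    rw [← lintegral_map hF₁ measurable_fst]
    congr 1
    exact Measure.fst_prod
  have e2 : ∫⁻ z, ENNReal.ofReal (dLE x₀ z.2 ^ p) ∂(G₁.prod G₂)
      = ∫⁻ x, ENNReal.ofReal (dLE x₀ x ^ p) ∂G₂ := by
    rw [← lintegral_map hF₂ measurable_snd]
    congr 1
    exact Measure.snd_prod
  rw [e1, e2]

end Aux

/-- Proposition 2 of the paper: if `G₁` and `G₂` have finite `p`-th
log-Euclidean moments around some point `(μ₀,Σ₀)`, then `Mix-SW_p^p(G₁,G₂) < ∞`. -/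
theorem statement4 (d : ℕ) (hd : 1 ≤ d) (p : ℝ) (hp : 1 ≤ p)
    (G₁ G₂ : Measure (E d × PDMat d)) [IsProbabilityMeasure G₁] [IsProbabilityMeasure G₂]
    (x₀ : E d × PDMat d)
    (h₁ : ∫⁻ x, ENNReal.ofReal (dLE x x₀ ^ p) ∂G₁ < ⊤)
    (h₂ : ∫⁻ x, ENNReal.ofReal (dLE x₀ x ^ p) ∂G₂ < ⊤) :
    MixSW d p G₁ G₂ < ⊤ := by
  classical
  set M₁ := ∫⁻ x, ENNReal.ofReal (dLE x x₀ ^ p) ∂G₁ with hM₁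
  set M₂ := ∫⁻ x, ENNReal.ofReal (dLE x₀ x ^ p) ∂G₂ with hM₂
  set C := ENNReal.ofReal (4 ^ p) * (M₁ + M₂) with hC
  have hC_lt : C < ⊤ :=
    ENNReal.mul_lt_top ENNReal.ofReal_lt_top (ENNReal.add_lt_top.mpr ⟨h₁, h₂⟩)
  refine lt_of_le_of_lt ?_ hC_lt
  rw [MixSW]
  have hbound : ∀ w : E 2, |w 0| ≤ 1 → |w 1| ≤ 1 →
      (∫⁻ v, ∫⁻ A, Wp p (G₁.map (projMix w v A)) (G₂.map (projMix w v A))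
        ∂(unifSymSphere d) ∂(unifSphere d)) ≤ C := by
    intro w hw0 hw1
    have hv' : ∀ v : E d, ‖v‖ ≤ 1 →
        (∫⁻ A, Wp p (G₁.map (projMix w v A)) (G₂.map (projMix w v A))
          ∂(unifSymSphere d)) ≤ C := by
      intro v hv
      have step : (∫⁻ A, Wp p (G₁.map (projMix w v A)) (G₂.map (projMix w v A))
          ∂(unifSymSphere d)) ≤ ∫⁻ _, C ∂(unifSymSphere d) :=
        lintegral_mono_ae ((ae_frobNorm_le_one d).mono fun A hA =>
          Wp_slice_le hp G₁ G₂ x₀ hw0 hw1 hv hA)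
      simpa [lintegral_const] using step
    have step : (∫⁻ v, ∫⁻ A, Wp p (G₁.map (projMix w v A)) (G₂.map (projMix w v A))
        ∂(unifSymSphere d) ∂(unifSphere d)) ≤ ∫⁻ _, C ∂(unifSphere d) :=
      lintegral_mono_ae ((ae_norm_le_one d).mono hv')
    simpa [lintegral_const] using step
  have step : (∫⁻ w, ∫⁻ v, ∫⁻ A, Wp p (G₁.map (projMix w v A)) (G₂.map (projMix w v A))
      ∂(unifSymSphere d) ∂(unifSphere d) ∂(unifSphere 2)) ≤ ∫⁻ _, C ∂(unifSphere 2) :=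
    lintegral_mono_ae ((ae_norm_le_one 2).mono fun w hw =>
      hbound w ((abs_apply_le_norm w 0).trans hw) ((abs_apply_le_norm w 1).trans hw))
  simpa [lintegral_const] using step


end PaperSOT
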